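/- arXiv:1805.04732 — 4 statements merged into one kernel-verified Lean document; each statement's English description precedes it below -/
import Mathlib

section
/- If f₁ : H₁ → G₁ and f₂ : H₂ → G₂ are core-free virtual endomorphisms, then the product map (f₁, f₂) : H₁ × H₂ → G₁ × G₂ is a core-free virtual endomorphism of G₁ × G₂, and the index [G₁ × G₂ : H₁ × H₂] equals [G₁ : H₁]·[G₂ : H₂]. -/
/-- `f : H → G` is a core-free virtual endomorphism: no nontrivial subgroup `K ≤ H`,
normal in `G`, satisfies `f(K) ≤ K`. -/
def CoreFree {G : Type*} [Group G] (H : Subgroup G) (f : ↥H →* G) : Prop :=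
  ∀ K : Subgroup G, K ≤ H → K.Normal → (∀ x : ↥H, (x : G) ∈ K → f x ∈ K) → K = ⊥

/-- The product virtual endomorphism `(f₁, f₂) : H₁ × H₂ → G₁ × G₂`. -/
def prodVE {G₁ G₂ : Type*} [Group G₁] [Group G₂] (H₁ : Subgroup G₁) (H₂ : Subgroup G₂)
    (f₁ : ↥H₁ →* G₁) (f₂ : ↥H₂ →* G₂) : ↥(H₁.prod H₂) →* G₁ × G₂ :=
  MonoidHom.mk' (fun x => (f₁ ⟨(x : G₁ × G₂).1, x.2.1⟩, f₂ ⟨(x : G₁ × G₂).2, x.2.2⟩))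
    (by
      intro a b
      ext <;> simp [← map_mul] <;> rfl)

/-!
If `K ≤ H₁ × H₂` is normal in `G₁ × G₂` and invariant under `(f₁, f₂)`, then its projection to
`Gᵢ` is normal (the projection is surjective), lies in `Hᵢ` and is `fᵢ`-invariant, so it is
trivial by core-freeness of `fᵢ`. A subgroup of `G₁ × G₂` with both projections trivial is trivial.
-/

section

variable {G₁ G₂ : Type*} [Group G₁] [Group G₂] {H₁ : Subgroup G₁} {H₂ : Subgroup G₂}
  {f₁ : ↥H₁ →* G₁} {f₂ : ↥H₂ →* G₂} {K : Subgroup (G₁ × G₂)}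

theorem CoreFree.map_fst_eq_bot (h₁ : CoreFree H₁ f₁) (hKH : K ≤ H₁.prod H₂) (hK : K.Normal)
    (hKf : ∀ x : ↥(H₁.prod H₂), (x : G₁ × G₂) ∈ K → prodVE H₁ H₂ f₁ f₂ x ∈ K) :
    K.map (MonoidHom.fst G₁ G₂) = ⊥ := by
  refine h₁ _ (Subgroup.le_prod_iff.1 hKH).1 (hK.map _ Prod.fst_surjective) ?_
  rintro ⟨-, -⟩ ⟨⟨a, b⟩, hab, rfl⟩
  exact ⟨_, hKf ⟨(a, b), hKH hab⟩ hab, rfl⟩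

theorem CoreFree.map_snd_eq_bot (h₂ : CoreFree H₂ f₂) (hKH : K ≤ H₁.prod H₂) (hK : K.Normal)
    (hKf : ∀ x : ↥(H₁.prod H₂), (x : G₁ × G₂) ∈ K → prodVE H₁ H₂ f₁ f₂ x ∈ K) :
    K.map (MonoidHom.snd G₁ G₂) = ⊥ := by
  refine h₂ _ (Subgroup.le_prod_iff.1 hKH).2 (hK.map _ Prod.snd_surjective) ?_
  rintro ⟨-, -⟩ ⟨⟨a, b⟩, hab, rfl⟩
  exact ⟨_, hKf ⟨(a, b), hKH hab⟩ hab, rfl⟩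

end

theorem prodVE_coreFree_general {G₁ G₂ : Type*} [Group G₁] [Group G₂]
    (H₁ : Subgroup G₁) (H₂ : Subgroup G₂)
    (f₁ : ↥H₁ →* G₁) (f₂ : ↥H₂ →* G₂)
    (h₁ : CoreFree H₁ f₁) (h₂ : CoreFree H₂ f₂) :
    CoreFree (H₁.prod H₂) (prodVE H₁ H₂ f₁ f₂) ∧
      (H₁.prod H₂).index = H₁.index * H₂.index := by
  refine ⟨fun K hKH hK hKf => ?_, Subgroup.index_prod H₁ H₂⟩
  rw [eq_bot_iff, ← Subgroup.bot_prod_bot, Subgroup.le_prod_iff,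
    h₁.map_fst_eq_bot hKH hK hKf, h₂.map_snd_eq_bot hKH hK hKf]
  exact ⟨le_rfl, le_rfl⟩

/-- the product of two core-free virtual endomorphisms is a core-free
virtual endomorphism, of index the product of the indices. -/
theorem prodVE_coreFree {G₁ G₂ : Type*} [Group G₁] [Group G₂]
    (H₁ : Subgroup G₁) (H₂ : Subgroup G₂) [H₁.FiniteIndex] [H₂.FiniteIndex]
    (f₁ : ↥H₁ →* G₁) (f₂ : ↥H₂ →* G₂)
    (h₁ : CoreFree H₁ f₁) (h₂ : CoreFree H₂ f₂) :
    CoreFree (H₁.prod H₂) (prodVE H₁ H₂ f₁ f₂) ∧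
      (H₁.prod H₂).index = H₁.index * H₂.index :=
  prodVE_coreFree_general H₁ H₂ f₁ f₂ h₁ h₂
end

section
/- Let η ∈ ℤ₂ (the 2-adic integers) with η ≡ 2 (mod 4), i.e., η = 2u with u a 2-adic unit. Then every a ∈ ℤ₂ admits a unique representation a = Σ_{i≥0} a_i η^i with all a_i ∈ {0,1}. -/
/-!
Writing `η - 2 = 4t` shows `η = 2(1 + 2t)` is associated to `2`, and the argument works for any
`x ∈ ℤ_[p]` associated to `p`, with digits `0, …, p - 1`. Existence is the greedy algorithm: the
residue `k < p` of `a` modulo the maximal ideal satisfies `x ∣ a - k`, so `a = k + x a'`; iterating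
gives `a = ∑_{i<n} c_i x^i + x^n r_n`, and the error term tends to `0` because `‖x‖ < 1`.
Uniqueness: the leading digits of two expansions of the same element agree modulo the maximal
ideal, hence are equal since `0, …, p - 1` are distinct residues; cancelling `x` from the tails
lets an induction run.
-/

open Filter Topology IsLocalRing

section GreedyExpansion

variable {R : Type*} [CommRing R]

theorem exists_digits_eq_sum_range_add_pow_mul {x : R} {D : R → Prop}
    (hstep : ∀ a, ∃ d r, D d ∧ a = d + x * r) (a : R) :
    ∃ c : ℕ → R, (∀ i, D (c i)) ∧
      ∀ n, ∃ r, a = ∑ i ∈ Finset.range n, c i * x ^ i + x ^ n * r := by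
  choose digit quot hdigit hquot using hstep
  refine ⟨fun i => digit (quot^[i] a), fun i => hdigit _, fun n => ⟨quot^[n] a, ?_⟩⟩
  induction n with
  | zero => simp
  | succ n ih =>
    rw [Finset.sum_range_succ, Function.iterate_succ_apply', pow_succ]
    linear_combination ih + x ^ n * hquot (quot^[n] a)

end GreedyExpansion

namespace PadicInt

variable {p : ℕ} [Fact p.Prime] {x : ℤ_[p]}

theorem associated_of_sq_dvd_sub (h : (p : ℤ_[p]) ^ 2 ∣ x - p) : Associated x p := by
  obtain ⟨t, ht⟩ := h
  have hunit : IsUnit (1 + p * t) := by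
    rw [show 1 + p * t = 1 - -(p * t) by ring]
    refine isUnit_one_sub_self_of_mem_nonunits _ (mem_nonunits.mpr ?_)
    rw [norm_lt_one_iff_dvd, dvd_neg]
    exact dvd_mul_right _ t
  rw [show x = p * (1 + p * t) by linear_combination ht]
  exact associated_mul_unit_left _ _ hunit

theorem summable_mul_pow (c : ℕ → ℤ_[p]) (hx : ‖x‖ < 1) : Summable fun i => c i * x ^ i :=
  .of_norm_bounded (summable_geometric_of_lt_one (norm_nonneg x) hx) fun i => by
    rw [norm_mul, norm_pow]
    exact mul_le_of_le_one_left (by positivity) (norm_le_one _)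

theorem tendsto_pow_mul_atTop_nhds_zero (r : ℕ → ℤ_[p]) (hx : ‖x‖ < 1) :
    Tendsto (fun n => x ^ n * r n) atTop (𝓝 0) := by
  refine squeeze_zero_norm (fun n => ?_) (tendsto_pow_atTop_nhds_zero_of_lt_one (norm_nonneg x) hx)
  rw [norm_mul, norm_pow]
  exact mul_le_of_le_one_right (by positivity) (norm_le_one _)

theorem tsum_mul_pow_eq_add_mul_tsum (c : ℕ → ℤ_[p]) (hx : ‖x‖ < 1) :
    ∑' i, c i * x ^ i = c 0 + x * ∑' i, c (i + 1) * x ^ i := by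
  rw [(summable_mul_pow c hx).tsum_eq_zero_add, ← (summable_mul_pow _ hx).tsum_mul_left]
  simp only [pow_zero, mul_one, pow_succ]
  congr 2 with i
  ring

theorem eq_of_natCast_sub_mem_maximalIdeal {k l : ℕ} (hk : k < p) (hl : l < p)
    (h : (k : ℤ_[p]) - l ∈ maximalIdeal ℤ_[p]) : k = l :=
  (existsUnique_mem_range (k : ℤ_[p])).unique ⟨hk, by simp⟩ ⟨hl, h⟩

theorem exists_digits_tsum_mul_pow_eq (hxp : x ∣ p) (hx : ‖x‖ < 1) (a : ℤ_[p]) :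
    ∃ c : ℕ → ℤ_[p], (∀ i, ∃ k < p, c i = k) ∧ a = ∑' i, c i * x ^ i := by
  have hstep (b : ℤ_[p]) : ∃ d r, (∃ k < p, d = (k : ℤ_[p])) ∧ b = d + x * r := by
    have hb := sub_zmodRepr_mem b
    rw [maximalIdeal_eq_span_p, Ideal.mem_span_singleton] at hb
    obtain ⟨r, hr⟩ := hxp.trans hb
    exact ⟨_, r, ⟨_, zmodRepr_lt_p b, rfl⟩, by linear_combination hr⟩
  obtain ⟨c, hc, hpartial⟩ := exists_digits_eq_sum_range_add_pow_mul hstep a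
  choose r hr using hpartial
  refine ⟨c, hc, (HasSum.tsum_eq ?_).symm⟩
  rw [(summable_mul_pow c hx).hasSum_iff_tendsto_nat]
  have hsum : (fun n => ∑ i ∈ Finset.range n, c i * x ^ i) = fun n => a - x ^ n * r n := by
    funext n
    linear_combination -hr n
  simpa [hsum] using tendsto_const_nhds.sub (tendsto_pow_mul_atTop_nhds_zero r hx)

theorem head_eq_and_tail_eq_of_tsum_mul_pow_eq (hx0 : x ≠ 0) (hx : ‖x‖ < 1)
    {c d : ℕ → ℤ_[p]} (hc : ∃ k < p, c 0 = k) (hd : ∃ k < p, d 0 = k)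
    (h : ∑' i, c i * x ^ i = ∑' i, d i * x ^ i) :
    c 0 = d 0 ∧ ∑' i, c (i + 1) * x ^ i = ∑' i, d (i + 1) * x ^ i := by
  rw [tsum_mul_pow_eq_add_mul_tsum c hx, tsum_mul_pow_eq_add_mul_tsum d hx] at h
  have hhead : c 0 = d 0 := by
    obtain ⟨k, hk, hck⟩ := hc
    obtain ⟨l, hl, hdl⟩ := hd
    have hmem : (k : ℤ_[p]) - l ∈ maximalIdeal ℤ_[p] := by
      have hxmem : x ∈ maximalIdeal ℤ_[p] := (mem_maximalIdeal x).mpr (mem_nonunits.mpr hx)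
      rw [← hck, ← hdl, show c 0 - d 0 = x * (∑' i, d (i + 1) * x ^ i - ∑' i, c (i + 1) * x ^ i)
        by linear_combination h]
      exact Ideal.mul_mem_right _ _ hxmem
    rw [hck, hdl, eq_of_natCast_sub_mem_maximalIdeal hk hl hmem]
  rw [hhead, add_right_inj] at h
  exact ⟨hhead, mul_left_cancel₀ hx0 h⟩

theorem eq_of_tsum_mul_pow_eq (hx0 : x ≠ 0) (hx : ‖x‖ < 1) {c d : ℕ → ℤ_[p]}
    (hc : ∀ i, ∃ k < p, c i = k) (hd : ∀ i, ∃ k < p, d i = k)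
    (h : ∑' i, c i * x ^ i = ∑' i, d i * x ^ i) : c = d := by
  funext n
  induction n generalizing c d with
  | zero => exact (head_eq_and_tail_eq_of_tsum_mul_pow_eq hx0 hx (hc 0) (hd 0) h).1
  | succ n ih =>
    exact ih (fun i => hc (i + 1)) (fun i => hd (i + 1))
      (head_eq_and_tail_eq_of_tsum_mul_pow_eq hx0 hx (hc 0) (hd 0) h).2

theorem existsUnique_digits_tsum_mul_pow_eq (hx : Associated x p) (a : ℤ_[p]) :
    ∃! c : ℕ → ℤ_[p], (∀ i, ∃ k < p, c i = k) ∧ a = ∑' i, c i * x ^ i := by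
  have hx0 : x ≠ 0 := hx.ne_zero_iff.mpr (Nat.cast_ne_zero.mpr (Fact.out : p.Prime).ne_zero)
  have hx1 : ‖x‖ < 1 := (norm_lt_one_iff_dvd x).mpr hx.symm.dvd
  obtain ⟨c, hc, hca⟩ := exists_digits_tsum_mul_pow_eq hx.dvd hx1 a
  exact ⟨c, ⟨hc, hca⟩, fun d ⟨hd, hda⟩ => eq_of_tsum_mul_pow_eq hx0 hx1 hd hc (hda ▸ hca)⟩

end PadicInt

/-- if `η ∈ ℤ₂` satisfies `η ≡ 2 (mod 4)`, then every `a ∈ ℤ₂` has a unique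
base-`η` representation `a = Σ_{i≥0} a_i η^i` with digits `a_i ∈ {0,1}`. -/
theorem unique_base_eta_representation (η : ℤ_[2]) (hη : (4 : ℤ_[2]) ∣ (η - 2))
    (a : ℤ_[2]) :
    ∃! c : ℕ → ℤ_[2], (∀ i, c i = 0 ∨ c i = 1) ∧ a = ∑' i, c i * η ^ i := by
  have hassoc : Associated η (2 : ℕ) :=
    PadicInt.associated_of_sq_dvd_sub (by norm_num [hη])
  have hdigit (z : ℤ_[2]) : (∃ k < (2 : ℕ), z = k) ↔ z = 0 ∨ z = 1 := by
    constructor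
    · rintro ⟨k, hk, rfl⟩
      interval_cases k <;> simp
    · rintro (rfl | rfl)
      exacts [⟨0, by norm_num⟩, ⟨1, by norm_num⟩]
  simpa only [hdigit] using PadicInt.existsUnique_digits_tsum_mul_pow_eq hassoc a
end

section
/- Let η ∈ ℤ₂ with η ≡ 2 (mod 4), and set G = ℤ[1/η] ∩ ℤ₂ (the set of 2-adic integers expressible as integer polynomials in 1/η) and H = G ∩ 2ℤ₂. Then [G : H] = 2 and the map f(a) = a/η maps H into G, so f restricts to a core-free virtual endomorphism of G. -/
/-- The additive subgroup `G = ℤ[1/η] ∩ ℤ₂` of `ℤ₂`: 2-adic integers expressible as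
integer polynomials in `1/η`. -/
noncomputable def zEtaInt (η : ℤ_[2]) : AddSubgroup ℤ_[2] where
  carrier := {a | ∃ p : Polynomial ℤ, (a : ℚ_[2]) = Polynomial.aeval ((η : ℚ_[2]))⁻¹ p}
  zero_mem' := ⟨0, by simp⟩
  add_mem' := by
    rintro a b ⟨p, hp⟩ ⟨q, hq⟩
    exact ⟨p + q, by push_cast [hp, hq]; simp⟩
  neg_mem' := by
    rintro a ⟨p, hp⟩
    exact ⟨-p, by push_cast [hp]; simp⟩

/-- The subgroup `2ℤ₂` of the additive group of 2-adic integers. -/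
noncomputable def twoZ2 : AddSubgroup ℤ_[2] :=
  (AddMonoidHom.mulLeft (2 : ℤ_[2])).range

/-!
Since `η ≡ 2 mod 4`, `η = 2u` with `u` a unit of `ℤ₂`, so `η` divides every element of `2ℤ₂`
and `a ↦ a / η` is defined on `H`; it lands in `G` because `η⁻¹` times a polynomial in `η⁻¹`
is again one. `H` is the kernel of reduction mod 2 on `G`, which is onto because `1 ∈ G`.
A subgroup `K ≤ H` stable under division by `η` consists of elements divisible by every power
of the non-unit `η`, so it is trivial by Krull's intersection theorem.
-/

open Polynomial

theorem exists_addMonoidHom_mul_eq_of_forall_dvd {R : Type*} [Ring R] [NoZeroDivisors R] {η : R}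
    (hη : η ≠ 0) {S : AddSubgroup R} (hS : ∀ x ∈ S, η ∣ x) :
    ∃ f : S →+ R, ∀ x : S, η * f x = x := by
  have hinj : Function.Injective (AddMonoidHom.mulLeft η) := mul_right_injective₀ hη
  have hle : S ≤ (AddMonoidHom.mulLeft η).range := fun x hx ↦ by
    obtain ⟨y, rfl⟩ := hS x hx
    exact ⟨y, rfl⟩
  exact ⟨(AddMonoidHom.ofInjective hinj).symm.toAddMonoidHom.comp (AddSubgroup.inclusion hle),
    fun x ↦ congrArg Subtype.val ((AddMonoidHom.ofInjective hinj).apply_symm_apply _)⟩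

theorem AddSubgroup.eq_bot_of_le_of_forall_div_mem {R : Type*} [CommRing R] [IsNoetherianRing R]
    [IsDomain R] {η : R} (hη : ¬IsUnit η) {S : AddSubgroup R} (f : S → R)
    (hf : ∀ x, η * f x = x) {K : AddSubgroup R} (hKS : K ≤ S)
    (hK : ∀ x : S, (x : R) ∈ K → f x ∈ K) : K = ⊥ := by
  have hdvd : ∀ n : ℕ, ∀ a ∈ K, η ^ n ∣ a := by
    intro n
    induction n with
    | zero => simp
    | succ n ih =>
      intro a ha
      obtain ⟨c, hc⟩ := ih _ (hK ⟨a, hKS ha⟩ ha)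
      exact ⟨c, by rw [pow_succ', mul_assoc, ← hc, hf]⟩
  have hkrull : ⨅ n : ℕ, Ideal.span {η} ^ n = ⊥ :=
    Ideal.iInf_pow_eq_bot_of_isDomain _ (by rwa [Ne, Ideal.span_singleton_eq_top])
  rw [AddSubgroup.eq_bot_iff_forall]
  intro a ha
  rw [← Ideal.mem_bot, ← hkrull, Ideal.mem_iInf]
  intro n
  rw [Ideal.span_singleton_pow, Ideal.mem_span_singleton]
  exact hdvd n a ha

theorem mem_twoZ2_iff {x : ℤ_[2]} : x ∈ twoZ2 ↔ 2 ∣ x :=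
  ⟨fun ⟨y, hy⟩ ↦ ⟨y, hy.symm⟩, fun ⟨y, hy⟩ ↦ ⟨y, hy.symm⟩⟩

theorem toZMod_eq_zero_iff_mem_twoZ2 {x : ℤ_[2]} : PadicInt.toZMod x = 0 ↔ x ∈ twoZ2 := by
  rw [← RingHom.mem_ker, PadicInt.ker_toZMod, PadicInt.maximalIdeal_eq_span_p,
    Ideal.mem_span_singleton, mem_twoZ2_iff, Nat.cast_ofNat]

theorem index_inf_twoZ2 {G : AddSubgroup ℤ_[2]} (hG : (1 : ℤ_[2]) ∈ G) :
    ((G ⊓ twoZ2).addSubgroupOf G).index = 2 := by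
  let ψ : G →+ ZMod 2 := PadicInt.toZMod.toAddMonoidHom.comp G.subtype
  have hker : ψ.ker = (G ⊓ twoZ2).addSubgroupOf G := by
    ext x
    simp [ψ, toZMod_eq_zero_iff_mem_twoZ2, AddSubgroup.mem_addSubgroupOf]
  have hsurj : Function.Surjective ψ := by
    intro c
    obtain ⟨n, rfl⟩ := ZMod.intCast_surjective c
    exact ⟨n • ⟨1, hG⟩, by simp [ψ]⟩
  rw [← hker, AddSubgroup.index_eq_card,
    Nat.card_congr (QuotientAddGroup.quotientKerEquivOfSurjective ψ hsurj).toEquiv, Nat.card_zmod]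

theorem two_mem_nonunits : (2 : ℤ_[2]) ∈ nonunits ℤ_[2] := by
  simpa using PadicInt.p_nonunit (p := 2)

theorem associated_two_of_four_dvd_sub_two {η : ℤ_[2]} (hη : (4 : ℤ_[2]) ∣ η - 2) :
    Associated 2 η := by
  obtain ⟨k, hk⟩ := hη
  have hunit : IsUnit (1 - 2 * -k) := IsLocalRing.isUnit_one_sub_self_of_mem_nonunits _
    (mul_mem_nonunits_left two_mem_nonunits)
  exact ⟨hunit.unit, by simp only [IsUnit.unit_spec]; linear_combination -hk⟩

theorem one_mem_zEtaInt (η : ℤ_[2]) : 1 ∈ zEtaInt η := ⟨1, by simp⟩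

theorem mem_zEtaInt_of_mul_mem {η y : ℤ_[2]} (hη : η ≠ 0) (h : η * y ∈ zEtaInt η) :
    y ∈ zEtaInt η := by
  obtain ⟨p, hp⟩ := h
  refine ⟨X * p, ?_⟩
  have hη' : (η : ℚ_[2]) ≠ 0 := PadicInt.coe_ne_zero.mpr hη
  rw [map_mul, aeval_X, ← hp, PadicInt.coe_mul, inv_mul_cancel_left₀ hη']

/-- with `G = ℤ[1/η] ∩ ℤ₂` and `H = G ∩ 2ℤ₂`, we have `[G : H] = 2`,
and `a ↦ a/η` maps `H` into `G`, restricting to a core-free virtual endomorphism of `G`. -/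
theorem zEtaInt_selfSimilar (η : ℤ_[2]) (hη : (4 : ℤ_[2]) ∣ (η - 2)) :
    ((zEtaInt η ⊓ twoZ2).addSubgroupOf (zEtaInt η)).index = 2 ∧
    ∃ f : ↥(zEtaInt η ⊓ twoZ2) →+ ℤ_[2],
      (∀ x : ↥(zEtaInt η ⊓ twoZ2), η * f x = (x : ℤ_[2])) ∧
      (∀ x : ↥(zEtaInt η ⊓ twoZ2), f x ∈ zEtaInt η) ∧
      (∀ K : AddSubgroup ℤ_[2], K ≤ zEtaInt η ⊓ twoZ2 →
        (∀ x : ↥(zEtaInt η ⊓ twoZ2), (x : ℤ_[2]) ∈ K → f x ∈ K) → K = ⊥) := by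
  have h2η := associated_two_of_four_dvd_sub_two hη
  have hη0 : η ≠ 0 := h2η.ne_zero_iff.mp two_ne_zero
  have hηu : ¬IsUnit η := h2η.isUnit_iff.not.mp two_mem_nonunits
  obtain ⟨f, hf⟩ := exists_addMonoidHom_mul_eq_of_forall_dvd hη0 (S := zEtaInt η ⊓ twoZ2)
    fun x hx ↦ h2η.symm.dvd.trans (mem_twoZ2_iff.mp hx.2)
  refine ⟨index_inf_twoZ2 (one_mem_zEtaInt η), f, hf, fun x ↦ ?_,
    fun K hK hfK ↦ AddSubgroup.eq_bot_of_le_of_forall_div_mem hηu f hf hK hfK⟩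
  exact mem_zEtaInt_of_mul_mem hη0 (by rw [hf]; exact x.2.1)
end

section
/- If η ∈ ℤ₂ satisfies η ≡ 2 (mod 4) and η is transcendental over ℚ, then the additive group G = ℤ[1/η] ∩ ℤ₂ is a free abelian group of countably infinite rank, i.e., G ≅ ℤ^{(ω)}. -/
open Polynomial

namespace Polynomial

variable {R : Type*}

theorem mem_degreeLT_of_coeff_eq_zero [Semiring R] {p : R[X]} {n : ℕ} (hp : p ∈ degreeLE R n)
    (hn : p.coeff n = 0) : p ∈ degreeLT R n := by
  rw [mem_degreeLE, degree_le_iff_coeff_zero] at hp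
  rw [mem_degreeLT, degree_lt_iff_coeff_zero]
  intro m hm
  rcases hm.eq_or_lt with rfl | hlt
  exacts [hn, hp m (by exact_mod_cast hlt)]

theorem rank_eq_aleph0 [Semiring R] [StrongRankCondition R] :
    Module.rank R R[X] = Cardinal.aleph0 := by
  simpa using (basisMonomials R).mk_eq_rank.symm

theorem exists_mem_degreeLE_forall_coeff_dvd [CommRing R] [IsPrincipalIdealRing R]
    (N : Submodule R R[X]) (n : ℕ) :
    ∃ b ∈ N ⊓ degreeLE R n, ∀ f ∈ N ⊓ degreeLE R n, b.coeff n ∣ f.coeff n := by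
  let J : Ideal R := (N ⊓ degreeLE R n).map (lcoeff R n)
  obtain ⟨b, hb, hbJ⟩ := Submodule.IsPrincipal.generator_mem J
  refine ⟨b, hb, fun f hf ↦ ?_⟩
  rw [← lcoeff_apply, hbJ, ← Submodule.IsPrincipal.mem_iff_generator_dvd]
  exact ⟨f, hf, rfl⟩

theorem inf_degreeLT_le_span_of_forall_coeff_dvd [CommRing R] {N : Submodule R R[X]}
    {b : ℕ → R[X]}    (hb : ∀ n : ℕ, b n ∈ N ⊓ degreeLE R n)
    (hdvd : ∀ n : ℕ, ∀ f ∈ N ⊓ degreeLE R n, (b n).coeff n ∣ f.coeff n) (n : ℕ) :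
    N ⊓ degreeLT R n ≤ Submodule.span R (b '' {n | (b n).coeff n ≠ 0}) := by
  induction n with
  | zero =>
    intro f hf
    rw [degree_eq_bot.mp (Nat.WithBot.lt_zero_iff.mp (mem_degreeLT.mp hf.2))]
    exact Submodule.zero_mem _
  | succ n ih =>
    intro f hf
    rw [degreeLT_succ_eq_degreeLE] at hf
    obtain ⟨t, ht⟩ := hdvd n f hf
    by_cases hn : (b n).coeff n = 0
    · exact ih ⟨hf.1, mem_degreeLT_of_coeff_eq_zero hf.2 (by simp [ht, hn])⟩
    have hrest : f - t • b n ∈ N ⊓ degreeLT R n :=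
      ⟨N.sub_mem hf.1 (N.smul_mem t (hb n).1), mem_degreeLT_of_coeff_eq_zero
        (Submodule.sub_mem _ hf.2 (Submodule.smul_mem _ t (hb n).2)) (by simp [ht, mul_comm])⟩
    simpa using Submodule.add_mem _ (ih hrest)
      (Submodule.smul_mem _ t (Submodule.subset_span ⟨n, hn, rfl⟩))

variable [CommRing R] [IsDomain R]

theorem linearIndependent_of_injective_degree {ι : Type*} {b : ι → R[X]} (hb : ∀ i, b i ≠ 0)
    (hdeg : Function.Injective (degree ∘ b)) : LinearIndependent R b := by
  rw [linearIndependent_iff']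
  intro s g hsum i hi
  by_contra hgi
  have hdisj : {j | j ∈ s ∧ g j • b j ≠ 0}.Pairwise
      (Function.onFun Ne fun j ↦ (g j • b j).degree) := by
    rintro j ⟨-, hj⟩ k ⟨-, hk⟩ hjk
    rw [Function.onFun,
      degree_smul_of_smul_regular _ (IsSMulRegular.of_ne_zero (smul_ne_zero_iff.mp hj).1),
      degree_smul_of_smul_regular _ (IsSMulRegular.of_ne_zero (smul_ne_zero_iff.mp hk).1)]
    exact hdeg.ne hjk
  have hsup := degree_sum_eq_of_disjoint _ s hdisj
  rw [hsum, degree_zero, eq_comm, Finset.sup_eq_bot_iff] at hsup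
  exact smul_ne_zero hgi (hb i) (degree_eq_bot.mp (hsup i hi))

theorem free_submodule [IsPrincipalIdealRing R] (N : Submodule R R[X]) : Module.Free R N := by
  choose b hb hdvd using exists_mem_degreeLE_forall_coeff_dvd N
  let S : Set ℕ := {n | (b n).coeff n ≠ 0}
  have hdeg (n : S) : (b n).degree = n :=
    degree_eq_of_le_of_coeff_ne_zero (mem_degreeLE.mp (hb n).2) n.2
  have hli : LinearIndependent R (fun n : S ↦ b n) :=
    linearIndependent_of_injective_degree (fun n h ↦ n.2 (by simp [h]))
      (fun m n h ↦ Subtype.ext (by simpa [hdeg] using h))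
  have hN : Submodule.span R (Set.range fun n : S ↦ b n) = N := by
    refine le_antisymm (Submodule.span_le.mpr ?_) fun f hf ↦ ?_
    · rintro _ ⟨n, rfl⟩
      exact (hb n).1
    · rw [← Set.image_eq_range]
      refine inf_degreeLT_le_span_of_forall_coeff_dvd hb hdvd (f.natDegree + 1) ⟨hf, ?_⟩
      exact mem_degreeLT.mpr (degree_lt_iff_coeff_zero _ _ |>.mpr
        fun m hm ↦ coeff_eq_zero_of_natDegree_lt hm)
  exact hN ▸ Module.Free.of_basis (Module.Basis.span hli)

end Polynomial

theorem Module.nonempty_linearEquiv_finsupp_nat {R M : Type*} [Ring R] [StrongRankCondition R]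
    [AddCommGroup M] [Module R M] [Module.Free R M] (h : Module.rank R M = Cardinal.aleph0) :
    Nonempty (M ≃ₗ[R] ℕ →₀ R) :=
  nonempty_linearEquiv_of_lift_rank_eq (by simp [h])

variable {p : ℕ} [hp : Fact p.Prime]

theorem Padic.exists_pow_mul_norm_le_one (x : ℚ_[p]) :
    ∃ k : ℕ, ‖(p : ℚ_[p]) ^ k * x‖ ≤ 1 := by
  rcases eq_or_ne x 0 with rfl | hx
  · exact ⟨0, by simp⟩
  refine ⟨(-x.valuation).toNat, ?_⟩
  rw [norm_le_one_iff_val_nonneg, valuation_mul (by simp [hp.out.ne_zero]) hx, valuation_pow,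
    valuation_p]
  omega

namespace PadicInt

noncomputable def integralPolynomials (x : ℚ_[p]) : Submodule ℤ ℤ[X] :=
  (subring p).toAddSubgroup.toIntSubmodule.comap (aeval x).toLinearMap

theorem mem_integralPolynomials {x : ℚ_[p]} {q : ℤ[X]} :
    q ∈ integralPolynomials x ↔ ‖aeval x q‖ ≤ 1 := Iff.rfl

theorem aleph0_le_rank_integralPolynomials (x : ℚ_[p]) :
    Cardinal.aleph0 ≤ Module.rank ℤ (integralPolynomials x) := by
  obtain ⟨c, hc, hcx⟩ : ∃ c : ℤ, c ≠ 0 ∧ ‖(c : ℚ_[p]) * x‖ ≤ 1 := by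
    obtain ⟨k, hk⟩ := Padic.exists_pow_mul_norm_le_one x
    exact ⟨p ^ k, pow_ne_zero _ (by exact_mod_cast hp.out.ne_zero), by exact_mod_cast hk⟩
  have hmem (n : ℕ) : (C c * X) ^ n ∈ integralPolynomials x := by
    rw [mem_integralPolynomials]
    simpa using pow_le_one₀ (norm_nonneg _) hcx
  have hli : LinearIndependent ℤ fun n ↦ (C c * X) ^ n := by
    refine linearIndependent_of_injective_degree
      (fun n ↦ pow_ne_zero _ (mul_ne_zero (C_ne_zero.mpr hc) X_ne_zero)) fun m n h ↦ ?_
    simpa only [Function.comp_apply, degree_pow, degree_C_mul_X hc, nsmul_one, Nat.cast_inj]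
      using h
  have hli' : LinearIndependent ℤ fun n ↦ (⟨_, hmem n⟩ : integralPolynomials x) :=
    .of_comp (Submodule.subtype _) hli
  simpa using hli'.cardinal_le_rank

theorem rank_integralPolynomials (x : ℚ_[p]) :
    Module.rank ℤ (integralPolynomials x) = Cardinal.aleph0 :=
  le_antisymm ((Submodule.rank_le _).trans_eq rank_eq_aleph0)
    (aleph0_le_rank_integralPolynomials x)

end PadicInt

theorem nonempty_addEquiv_zEtaInt (η : ℤ_[2]) (htr : Transcendental ℚ (η : ℚ_[2])) :
    Nonempty (PadicInt.integralPolynomials (η : ℚ_[2])⁻¹ ≃+ zEtaInt η) := by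
  have hinj : Function.Injective (aeval (η : ℚ_[2])⁻¹ : ℤ[X] →ₐ[ℤ] ℚ_[2]) :=
    transcendental_iff_injective.mp
      (Transcendental.restrictScalars (R := ℤ) Int.cast_injective (mt IsAlgebraic.inv_iff.mp htr))
  let f : PadicInt.integralPolynomials (η : ℚ_[2])⁻¹ →+ zEtaInt η :=
    { toFun q := ⟨⟨aeval _ q.1, q.2⟩, q.1, rfl⟩
      map_zero' := Subtype.ext (PadicInt.ext (map_zero _))
      map_add' q r := Subtype.ext (PadicInt.ext (map_add _ _ _)) }
  refine ⟨AddEquiv.ofBijective f ⟨fun q r h ↦ ?_, ?_⟩⟩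
  · exact Subtype.ext (hinj (congrArg (fun a : zEtaInt η ↦ ((a : ℤ_[2]) : ℚ_[2])) h))
  · rintro ⟨a, q, hq⟩
    exact ⟨⟨q, by rw [PadicInt.mem_integralPolynomials, ← hq]; exact a.norm_le_one⟩,
      Subtype.ext (PadicInt.ext hq.symm)⟩

theorem zEtaInt_free_of_transcendental_general (η : ℤ_[2])
    (htr : Transcendental ℚ (η : ℚ_[2])) :
    Nonempty (↥(zEtaInt η) ≃+ (ℕ →₀ ℤ)) := by
  obtain ⟨e⟩ := nonempty_addEquiv_zEtaInt η htr
  have := Polynomial.free_submodule (PadicInt.integralPolynomials (η : ℚ_[2])⁻¹)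
  obtain ⟨f⟩ := Module.nonempty_linearEquiv_finsupp_nat
    (PadicInt.rank_integralPolynomials (η : ℚ_[2])⁻¹)
  exact ⟨e.symm.trans f.toAddEquiv⟩

/-- if `η ≡ 2 (mod 4)` is transcendental over `ℚ`, then
`G = ℤ[1/η] ∩ ℤ₂` is free abelian of countably infinite rank, i.e. `G ≅ ℤ^{(ω)}`. -/
theorem zEtaInt_free_of_transcendental (η : ℤ_[2]) (hη : (4 : ℤ_[2]) ∣ (η - 2))
    (htr : Transcendental ℚ (η : ℚ_[2])) :
    Nonempty (↥(zEtaInt η) ≃+ (ℕ →₀ ℤ)) :=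
  zEtaInt_free_of_transcendental_general η htr
end
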